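/- Consider a single machine with release dates, and let σ and π be two permutations of the same finite jobset, both scheduled starting at time t₀. Let Ω be a finite set of jobs disjoint from that jobset, and let E_min(π) = max(C(t₀, π), min_{i∈Ω} r(i)). If C(t₀, σ) ≤ max(C(t₀, π), E_min(π)) and cost(t₀, σ) ≤ cost(t₀, π), then for every permutation ρ of Ω, cost(t₀, σ ++ ρ) ≤ cost(t₀, π ++ ρ). -/

import Mathlib

/-!
Appending `ρ` to `σ` costs `cost(t₀, σ)` plus the cost of `ρ` started at `C(t₀, σ)`, and the latter
depends on the start time `t` only through `max t (r i)`, where `i` is the first job of `ρ`, and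
monotonically so. Since `i ∈ Ω`, the hypothesis on `C(t₀, σ)` gives
`max (C(t₀, σ)) (r i) ≤ max (C(t₀, π)) (r i)`, and the cost hypothesis handles the prefix.
-/

/-- State `(completion time, total cost)` of a job sequence on a single
machine with release dates `r` and processing times `p`, started at time `t₀`:
the completion time satisfies `C(t₀, []) = t₀` and
`C(t₀, π ++ [i]) = max(C(t₀, π), r i) + p i`, and the cost is the sum of the
completion times of the jobs of the sequence. -/
def relState (r p : ℕ → ℕ) (t0 : ℕ) (π : List ℕ) : ℕ × ℕ :=
  π.foldl (fun s i =>
    let c := max s.1 (r i) + p i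
    (c, s.2 + c)) (t0, 0)

/-- Completion time of the sequence `π` started at time `t₀`. -/
def relC (r p : ℕ → ℕ) (t0 : ℕ) (π : List ℕ) : ℕ := (relState r p t0 π).1

/-- Sum of the completion times of the jobs of `π`, started at time `t₀`. -/
def relCost (r p : ℕ → ℕ) (t0 : ℕ) (π : List ℕ) : ℕ := (relState r p t0 π).2

/-- `π` is a permutation of the finite jobset `S`: it lists each element
of `S` exactly once. -/
def IsPermOf (π : List ℕ) (S : Finset ℕ) : Prop :=
  π.Nodup ∧ ∀ x, x ∈ π ↔ x ∈ S

def relStep (r p : ℕ → ℕ) (s : ℕ × ℕ) (i : ℕ) : ℕ × ℕ :=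
  (max s.1 (r i) + p i, s.2 + (max s.1 (r i) + p i))

section

variable (r p : ℕ → ℕ)

theorem relState_eq_foldl (t : ℕ) (π : List ℕ) :
    relState r p t π = π.foldl (relStep r p) (t, 0) := rfl

theorem foldl_relStep (ρ : List ℕ) (t s : ℕ) :
    ρ.foldl (relStep r p) (t, s) = (relC r p t ρ, s + relCost r p t ρ) := by
  induction ρ generalizing t s with
  | nil => simp [relC, relCost, relState]
  | cons i ρ ih =>
    rw [List.foldl_cons, relC, relCost, relState_eq_foldl, List.foldl_cons]
    simp only [relStep, ih, Prod.mk.injEq, true_and]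
    ring

theorem relCost_cons (t i : ℕ) (ρ : List ℕ) :
    relCost r p t (i :: ρ) = max t (r i) + p i + relCost r p (max t (r i) + p i) ρ := by
  rw [relCost, relState_eq_foldl, List.foldl_cons, relStep, zero_add, foldl_relStep]

theorem relCost_append (t : ℕ) (σ ρ : List ℕ) :
    relCost r p t (σ ++ ρ) = relCost r p t σ + relCost r p (relC r p t σ) ρ := by
  rw [relCost, relState_eq_foldl, List.foldl_append, ← relState_eq_foldl,
    show relState r p t σ = (relC r p t σ, relCost r p t σ) from rfl, foldl_relStep]

theorem relCost_monotone (ρ : List ℕ) : Monotone fun t => relCost r p t ρ := by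
  induction ρ with
  | nil => intro t t' _; simp [relCost, relState]
  | cons i ρ ih =>
    intro t t' h
    have hstart : max t (r i) + p i ≤ max t' (r i) + p i := by gcongr
    simp only [relCost_cons]
    exact add_le_add hstart (ih hstart)

theorem relCost_cons_le_of_max_le {t t' i : ℕ} (h : max t (r i) ≤ max t' (r i)) (ρ : List ℕ) :
    relCost r p t (i :: ρ) ≤ relCost r p t' (i :: ρ) := by
  have hstart : max t (r i) + p i ≤ max t' (r i) + p i := by gcongr
  simp only [relCost_cons]
  exact add_le_add hstart (relCost_monotone r p ρ hstart)

theorem relCost_append_cons_le {t i : ℕ} {σ π : List ℕ}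
    (hcost : relCost r p t σ ≤ relCost r p t π)
    (hC : max (relC r p t σ) (r i) ≤ max (relC r p t π) (r i)) (ρ : List ℕ) :
    relCost r p t (σ ++ i :: ρ) ≤ relCost r p t (π ++ i :: ρ) := by
  rw [relCost_append, relCost_append]
  exact add_le_add hcost (relCost_cons_le_of_max_le r p hC ρ)

end

theorem stmt_17_general (r p : ℕ → ℕ) (t0 : ℕ) (Ω : Finset ℕ)
    (hΩ : Ω.Nonempty)
    (σ π : List ℕ)
    (hC : relC r p t0 σ ≤
      max (relC r p t0 π) (max (relC r p t0 π) (Ω.inf' hΩ r)))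
    (hcost : relCost r p t0 σ ≤ relCost r p t0 π) :
    ∀ ρ : List ℕ, IsPermOf ρ Ω →
      relCost r p t0 (σ ++ ρ) ≤ relCost r p t0 (π ++ ρ) := by
  intro ρ hρ
  obtain ⟨i, ρ', rfl⟩ : ∃ i ρ', ρ = i :: ρ' := by
    obtain ⟨x, hx⟩ := hΩ
    exact List.exists_cons_of_ne_nil (List.ne_nil_of_mem ((hρ.2 x).2 hx))
  have hmin : Ω.inf' hΩ r ≤ r i := Finset.inf'_le r ((hρ.2 i).1 List.mem_cons_self)
  refine relCost_append_cons_le r p hcost (max_le ?_ (le_max_right _ _)) ρ'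
  rw [← max_assoc, max_self] at hC
  exact hC.trans (max_le_max le_rfl hmin)

theorem stmt_17 (r p : ℕ → ℕ) (t0 : ℕ) (J Ω : Finset ℕ)
    (hdisj : Disjoint J Ω) (hΩ : Ω.Nonempty)
    (σ π : List ℕ) (hσ : IsPermOf σ J) (hπ : IsPermOf π J)
    (hC : relC r p t0 σ ≤
      max (relC r p t0 π) (max (relC r p t0 π) (Ω.inf' hΩ r)))
    (hcost : relCost r p t0 σ ≤ relCost r p t0 π) :
    ∀ ρ : List ℕ, IsPermOf ρ Ω →
      relCost r p t0 (σ ++ ρ) ≤ relCost r p t0 (π ++ ρ) :=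
  stmt_17_general r p t0 Ω hΩ σ π hC hcost
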